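/- arXiv:0805.4366 — 2 statements merged into one kernel-verified Lean document; each statement's English description precedes it below -/
import Mathlib

section
/- There exists a bounded 2×2 matrix function B on the unit circle such that B(ζ)* = B(ζ) and trace B(ζ) = 1 for all ζ ∈ 𝕋, the eigenvalues of B(ζ) are positive and bounded away from zero uniformly in ζ, and there is no constant self-adjoint 2×2 matrix C with rank C = 1 and trace(B(ζ)C) = 1 for a.e. ζ ∈ 𝕋. -/
open MeasureTheory Complex AddCircle Matrix
open scoped ENNReal Real

noncomputable section

instance : Fact (0 < 2 * Real.pi) := ⟨by positivity⟩

/-- The unit circle, realized as `ℝ / 2πℤ`. -/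
abbrev UnitCircle := AddCircle (2 * Real.pi)

/-- Normalized Lebesgue (Haar) measure on the circle. -/
abbrev mT : Measure UnitCircle := haarAddCircle

/-- Operator norm of a matrix, acting between Euclidean spaces. -/
def opN {ι κ : Type} [Fintype ι] [Fintype κ] [DecidableEq κ] (A : Matrix ι κ ℂ) : ℝ :=
  ‖(LinearMap.toContinuousLinearMap (Matrix.toEuclideanLin A) :
      EuclideanSpace ℂ κ →L[ℂ] EuclideanSpace ℂ ι)‖

/-- Hilbert–Schmidt (Frobenius) norm of a matrix. -/
def frob {ι κ : Type} [Fintype ι] [Fintype κ] (A : Matrix ι κ ℂ) : ℝ :=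
  Real.sqrt (∑ i, ∑ j, ‖A i j‖ ^ 2)

/-- Trace (nuclear) norm of a matrix: the sum of its singular values, i.e. of the
square roots of the eigenvalues of `Aᴴ * A`. -/
def trN {ι κ : Type} [Fintype ι] [Fintype κ] [DecidableEq κ] (A : Matrix ι κ ℂ) : ℝ :=
  ∑ j, Real.sqrt ((Matrix.isHermitian_mul_conjTranspose_self Aᴴ).eigenvalues j)

/-- The scalar Hardy class `H^p` on the circle: `L^p` functions whose negative Fourier
coefficients vanish. -/
def ScalarHardy (p : ℝ≥0∞) (f : UnitCircle → ℂ) : Prop :=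
  MemLp f p mT ∧ ∀ n : ℤ, n < 0 → fourierCoeff f n = 0

/-- The vector-valued Hardy class `H^p(ℂ^ι)`. -/
def VectHardy {ι : Type} [Fintype ι] (p : ℝ≥0∞) (f : UnitCircle → EuclideanSpace ℂ ι) : Prop :=
  MemLp f p mT ∧ ∀ n : ℤ, n < 0 → fourierCoeff f n = 0

/-- The matrix-valued Hardy class `H^p(M_{ι,κ})` (entrywise). -/
def MatHardy {ι κ : Type} [Fintype ι] [Fintype κ] (p : ℝ≥0∞)
    (F : UnitCircle → Matrix ι κ ℂ) : Prop :=
  (∀ i j, MemLp (fun t => F t i j) p mT) ∧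
    ∀ n : ℤ, n < 0 → ∀ i j, fourierCoeff (fun t => F t i j) n = 0

/-- The `L²` norm of the antianalytic (negative-frequency) part of a scalar function,
computed via Parseval. -/
def negNormSc (g : UnitCircle → ℂ) : ℝ≥0∞ :=
  (∑' k : ℕ, (‖fourierCoeff g (-((k : ℤ) + 1))‖₊ : ℝ≥0∞) ^ 2) ^ (1 / 2 : ℝ)

/-- The `L²(ℂ^ι)` norm of the antianalytic part of a vector function. -/
def negNormVec {ι : Type} [Fintype ι] (g : UnitCircle → EuclideanSpace ℂ ι) : ℝ≥0∞ :=
  (∑' k : ℕ, (‖fourierCoeff g (-((k : ℤ) + 1))‖₊ : ℝ≥0∞) ^ 2) ^ (1 / 2 : ℝ)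

/-- The `L²(S₂)` norm of the antianalytic part of a matrix function. -/
def negNormMat {ι κ : Type} [Fintype ι] [Fintype κ] (G : UnitCircle → Matrix ι κ ℂ) : ℝ≥0∞ :=
  (∑' k : ℕ, ∑ i, ∑ j,
      (‖fourierCoeff (fun t => G t i j) (-((k : ℤ) + 1))‖₊ : ℝ≥0∞) ^ 2) ^ (1 / 2 : ℝ)

/-- The norm of the Hankel operator `H_Φ : H^q(S₂) → H²₋(S₂)` on matrix functions,
`F ↦ P₋(ΦF)`. -/
def matHankelNorm {ι : Type} [Fintype ι] (q : ℝ≥0∞)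
    (Φ : UnitCircle → Matrix ι ι ℂ) : ℝ≥0∞ :=
  ⨆ F : {F : UnitCircle → Matrix ι ι ℂ //
      MatHardy q F ∧ eLpNorm (fun t => frob (F t)) q mT ≤ 1},
    negNormMat (fun t => Φ t * F.1 t)

/-- The distance in `L^p` (pointwise operator norm) from `Φ` to `H^p(M_n)`. -/
def distHp {ι κ : Type} [Fintype ι] [Fintype κ] [DecidableEq κ] (p : ℝ≥0∞)
    (Φ : UnitCircle → Matrix ι κ ℂ) : ℝ≥0∞ :=
  ⨅ Q : {Q : UnitCircle → Matrix ι κ ℂ // MatHardy p Q},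
    eLpNorm (fun t => opN (Φ t - Q.1 t)) p mT

/-- `Q` is a best analytic approximant to `Φ` in `L^p`. -/
def IsBestApprox {ι κ : Type} [Fintype ι] [Fintype κ] [DecidableEq κ] (p : ℝ≥0∞)
    (Φ Q : UnitCircle → Matrix ι κ ℂ) : Prop :=
  MatHardy p Q ∧ eLpNorm (fun t => opN (Φ t - Q t)) p mT = distHp p Φ

/-- `F` is a maximizing vector of the matrix Hankel operator
`H_Φ : H^q(S₂) → H²₋(S₂)`. -/
def IsMaximizing {ι : Type} [Fintype ι] (q : ℝ≥0∞)
    (Φ F : UnitCircle → Matrix ι ι ℂ) : Prop :=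
  MatHardy q F ∧ ¬ F =ᵐ[mT] 0 ∧
    negNormMat (fun t => Φ t * F t) =
      matHankelNorm q Φ * eLpNorm (fun t => frob (F t)) q mT

/-- A scalar inner function: bounded, analytic, of modulus one a.e. on the circle. -/
def IsInner (θ : UnitCircle → ℂ) : Prop :=
  MemLp θ ⊤ mT ∧ (∀ n : ℤ, n < 0 → fourierCoeff θ n = 0) ∧ ∀ᵐ t ∂mT, ‖θ t‖ = 1

/-- A scalar outer function in `H²`, characterized by the arithmetic–geometric mean
equality `log |ĥ(0)| = ∫ log |h| dm`. -/
def IsOuter (h : UnitCircle → ℂ) : Prop :=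
  MemLp h 2 mT ∧ (∀ n : ℤ, n < 0 → fourierCoeff h n = 0) ∧
    Integrable (fun t => Real.log ‖h t‖) mT ∧
    Real.log ‖fourierCoeff h 0‖ = ∫ t, Real.log ‖h t‖ ∂mT

/-- An inner matrix function: bounded analytic with `Θᴴ Θ = I` a.e. on the circle. -/
def MatInner {ι κ : Type} [Fintype ι] [Fintype κ] [DecidableEq κ]
    (Θ : UnitCircle → Matrix ι κ ℂ) : Prop :=
  (∀ i j, MemLp (fun t => Θ t i j) ⊤ mT) ∧
    (∀ n : ℤ, n < 0 → ∀ i j, fourierCoeff (fun t => Θ t i j) n = 0) ∧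
    ∀ᵐ t ∂mT, (Θ t)ᴴ * Θ t = 1

/-- An analytic (nonnegative-frequency) vector-valued trigonometric polynomial. -/
def AnalyticTrigPoly {ι : Type} [Fintype ι] (g : UnitCircle → EuclideanSpace ℂ ι) : Prop :=
  ∃ (N : ℕ) (c : Fin N → EuclideanSpace ℂ ι),
    g = fun t => ∑ j : Fin N, (fourier ((j : ℕ) : ℤ) t) • c j

/-- An outer matrix function: `F ∈ H²` and polynomial multiples of `F` are dense
in `H²(ℂ^ι)`. -/
def MatOuter {ι κ : Type} [Fintype ι] [Fintype κ] [DecidableEq κ]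
    (F : UnitCircle → Matrix ι κ ℂ) : Prop :=
  MatHardy 2 F ∧
    ∀ g : UnitCircle → EuclideanSpace ℂ ι, VectHardy 2 g → ∀ ε : ℝ, 0 < ε →
      ∃ q : UnitCircle → EuclideanSpace ℂ κ, AnalyticTrigPoly q ∧
        eLpNorm (fun t => Matrix.toEuclideanLin (F t) (q t) - g t) 2 mT < ENNReal.ofReal ε

/-- A co-outer matrix function: its transpose is outer. -/
def MatCoouter {ι κ : Type} [Fintype ι] [DecidableEq ι] [Fintype κ]
    (F : UnitCircle → Matrix ι κ ℂ) : Prop :=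
  MatOuter (fun t => (F t)ᵀ)

/-!
Take `B = !![α, β; conj β, 1 - α]` with `α = 1/2 + (Re ζ)/8` and `β = ζ²/8`. Since
`|β| = 1/8 ≤ min α (1 - α) - 1/4`, diagonal dominance gives `B ≥ 1/4`. For a constant `C`,
`trace (B C) = C₁₁ + α (C₀₀ - C₁₁) + β C₁₀ + conj β C₀₁` is a trigonometric polynomial with
frequencies `0, ±1, ±2`; if it equals `1` a.e., comparing Fourier coefficients forces `C = 1`,
which has rank 2.
-/

namespace Matrix

def hermTraceOne (a : ℝ) (b : ℂ) : Matrix (Fin 2) (Fin 2) ℂ :=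
  !![(a : ℂ), b; star b, ((1 - a : ℝ) : ℂ)]

variable (a : ℝ) (b : ℂ)

theorem conjTranspose_hermTraceOne : (hermTraceOne a b)ᴴ = hermTraceOne a b := by
  ext i j
  fin_cases i <;> fin_cases j <;> simp [hermTraceOne]

theorem trace_hermTraceOne : (hermTraceOne a b).trace = 1 := by
  simp [hermTraceOne, trace_fin_two]

theorem trace_hermTraceOne_mul (C : Matrix (Fin 2) (Fin 2) ℂ) :
    (hermTraceOne a b * C).trace = C 1 1 + a * (C 0 0 - C 1 1) + b * C 1 0 + star b * C 0 1 := by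
  rw [trace_fin_two]
  simp only [hermTraceOne, mul_apply, Fin.sum_univ_two, of_apply, cons_val', cons_val_zero,
    cons_val_one, cons_val_fin_one]
  push_cast
  ring

theorem re_inner_hermTraceOne (v : EuclideanSpace ℂ (Fin 2)) :
    (inner ℂ v (toEuclideanLin (hermTraceOne a b) v)).re =
      a * ‖v 0‖ ^ 2 + (1 - a) * ‖v 1‖ ^ 2 + 2 * (star (v 0) * b * v 1).re := by
  simp [hermTraceOne, toLpLin_apply, PiLp.inner_apply, dotProduct, Fin.sum_univ_two,
    Complex.sq_norm, Complex.normSq_apply]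
  ring

theorem le_re_inner_hermTraceOne {δ : ℝ} (h₀ : δ + ‖b‖ ≤ a) (h₁ : δ + ‖b‖ ≤ 1 - a)
    (v : EuclideanSpace ℂ (Fin 2)) :
    δ * ‖v‖ ^ 2 ≤ (inner ℂ v (toEuclideanLin (hermTraceOne a b) v)).re := by
  have hcross : -(‖v 0‖ * ‖b‖ * ‖v 1‖) ≤ (star (v 0) * b * v 1).re := by
    have := Complex.abs_re_le_norm (star (v 0) * b * v 1)
    rw [norm_mul, norm_mul, norm_star] at this
    linarith [abs_le.mp this]
  rw [re_inner_hermTraceOne, EuclideanSpace.norm_sq_eq, Fin.sum_univ_two]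
  nlinarith [mul_nonneg (norm_nonneg b) (sq_nonneg (‖v 0‖ - ‖v 1‖)), sq_nonneg ‖v 0‖,
    sq_nonneg ‖v 1‖]

end Matrix

namespace AddCircle

variable {T : ℝ}

theorem fourierCoeff_sum_mul_fourier [Fact (0 < T)] {ι : Type*} [Fintype ι] (k : ι → ℤ)
    (c : ι → ℂ) (n : ℤ) :
    fourierCoeff (fun t : AddCircle T => ∑ j, c j * fourier (k j) t) n =
      ∑ j, if k j = n then c j else 0 := by
  have hint : ∀ j ∈ Finset.univ, Integrable (fun t : AddCircle T => c j * fourier (k j) t)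
      haarAddCircle := fun j _ =>
    (continuous_const.mul (fourier (k j)).continuous).integrable_of_hasCompactSupport
      (HasCompactSupport.of_compactSpace _)
  rw [← Finset.sum_fn, fourierCoeff.sum _ _ hint, Finset.sum_apply]
  refine Finset.sum_congr rfl fun j _ => ?_
  rw [fourierCoeff.const_mul, fourierCoeff_fourier, Pi.single_apply]
  split_ifs <;> simp_all [eq_comm]

theorem coeff_eq_of_sum_mul_fourier_ae_eq [Fact (0 < T)] {ι : Type*} [Fintype ι] {k : ι → ℤ}
    (hk : Function.Injective k) {c d : ι → ℂ}
    (h : (fun t : AddCircle T => ∑ j, c j * fourier (k j) t) =ᵐ[haarAddCircle]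
      fun t => ∑ j, d j * fourier (k j) t) : c = d := by
  classical
  funext i
  have := congrFun (fourierCoeff_congr_ae h) (k i)
  rw [fourierCoeff_sum_mul_fourier, fourierCoeff_sum_mul_fourier] at this
  simpa only [hk.eq_iff, Finset.sum_ite_eq', Finset.mem_univ, if_true] using this

open Matrix

def exampleMatrixFun (t : AddCircle T) : Matrix (Fin 2) (Fin 2) ℂ :=
  hermTraceOne (1 / 2 + (fourier 1 t).re / 8) (fourier 2 t / 8)

theorem memLp_top_exampleMatrixFun_apply [Fact (0 < T)] (i j : Fin 2) :
    MemLp (fun t : AddCircle T => exampleMatrixFun t i j) ⊤ haarAddCircle := by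
  refine Continuous.memLp_top_of_hasCompactSupport ?_ (.of_compactSpace _) _
  fin_cases i <;> fin_cases j <;>
    simp only [exampleMatrixFun, hermTraceOne, of_apply, cons_val', cons_val_zero, cons_val_one,
      cons_val_fin_one, Fin.zero_eta, Fin.mk_one] <;>
    fun_prop

theorem le_re_inner_exampleMatrixFun (t : AddCircle T) (v : EuclideanSpace ℂ (Fin 2)) :
    1 / 4 * ‖v‖ ^ 2 ≤ (inner ℂ v (toEuclideanLin (exampleMatrixFun t) v)).re := by
  have hβ : ‖fourier 2 t / 8‖ = 1 / 8 := by
    rw [norm_div, fourier_apply, Circle.norm_coe]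
    norm_num
  have hα := abs_le.mp ((Complex.abs_re_le_norm (fourier 1 t)).trans_eq
    (by rw [fourier_apply, Circle.norm_coe]))
  exact le_re_inner_hermTraceOne _ _ (by linarith) (by linarith) v

theorem trace_exampleMatrixFun_mul (C : Matrix (Fin 2) (Fin 2) ℂ) (t : AddCircle T) :
    (exampleMatrixFun t * C).trace =
      ∑ j, ![C 1 1 + (C 0 0 - C 1 1) / 2, (C 0 0 - C 1 1) / 16, (C 0 0 - C 1 1) / 16,
        C 1 0 / 8, C 0 1 / 8] j * fourier (![0, 1, -1, 2, -2] j) t := by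
  rw [exampleMatrixFun, trace_hermTraceOne_mul]
  simp only [Fin.sum_univ_five, cons_val_zero, cons_val_one, cons_val, fourier_zero, fourier_neg,
    ofReal_add, ofReal_div, ofReal_one, ofReal_ofNat, re_eq_add_conj, star_div₀, RCLike.star_def,
    map_ofNat]
  ring

theorem eq_one_of_ae_trace_exampleMatrixFun_mul_eq_one [Fact (0 < T)]
    {C : Matrix (Fin 2) (Fin 2) ℂ}
    (h : ∀ᵐ t ∂(haarAddCircle : Measure (AddCircle T)), (exampleMatrixFun t * C).trace = 1) :
    C = 1 := by
  have hcoeff := coeff_eq_of_sum_mul_fourier_ae_eq (T := T) (k := ![0, 1, -1, 2, -2])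
    (by decide) (d := ![1, 0, 0, 0, 0]) (by
      filter_upwards [h] with t ht
      rw [← trace_exampleMatrixFun_mul, ht]
      simp [Fin.sum_univ_five, fourier_zero, -fourier_apply])
  have h₀ : C 1 1 + (C 0 0 - C 1 1) / 2 = 1 := congrFun hcoeff 0
  have h₁ : (C 0 0 - C 1 1) / 16 = 0 := congrFun hcoeff 1
  have h₃ : C 1 0 / 8 = 0 := congrFun hcoeff 3
  have h₄ : C 0 1 / 8 = 0 := congrFun hcoeff 4
  rw [eta_fin_two C, one_fin_two, show C 0 0 = 1 by linear_combination h₀ + 8 * h₁,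
    show C 1 1 = 1 by linear_combination h₀ - 8 * h₁,
    show C 0 1 = 0 by linear_combination 8 * h₄, show C 1 0 = 0 by linear_combination 8 * h₃]

end AddCircle

/-- There is a bounded self-adjoint `2×2` matrix function `B` on the circle with
`trace B(ζ) = 1`, eigenvalues positive and uniformly bounded away from zero, such that no
constant self-adjoint rank-one matrix `C` satisfies `trace (B(ζ) C) = 1` a.e. -/
theorem stmt10 :
    ∃ B : UnitCircle → Matrix (Fin 2) (Fin 2) ℂ,
      (∀ i j, MemLp (fun t => B t i j) ⊤ mT) ∧
      (∀ t, (B t)ᴴ = B t) ∧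
      (∀ t, Matrix.trace (B t) = 1) ∧
      (∃ δ : ℝ, 0 < δ ∧ ∀ t, ∀ v : EuclideanSpace ℂ (Fin 2),
        δ * ‖v‖ ^ 2 ≤ (inner ℂ v (Matrix.toEuclideanLin (B t) v) : ℂ).re) ∧
      ¬ ∃ C : Matrix (Fin 2) (Fin 2) ℂ, Cᴴ = C ∧ C.rank = 1 ∧
          ∀ᵐ t ∂mT, Matrix.trace (B t * C) = 1 := by
  refine ⟨exampleMatrixFun, memLp_top_exampleMatrixFun_apply,
    fun _ => conjTranspose_hermTraceOne _ _, fun _ => trace_hermTraceOne _ _,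
    ⟨1 / 4, by norm_num, le_re_inner_exampleMatrixFun⟩, ?_⟩
  rintro ⟨C, -, hrank, hC⟩
  rw [eq_one_of_ae_trace_exampleMatrixFun_mul_eq_one hC, rank_one] at hrank
  simp at hrank

end
end

section
/- Let A be a bounded positive definite n×n matrix function on the unit circle with bounded inverse, and let A = ΨΨ* where Ψ is an invertible matrix function in H^∞(M_n) with Ψ⁻¹ ∈ H^∞(M_n). A matrix function F ∈ H^∞(M_n) satisfies AF* = FA a.e. on 𝕋 if and only if F = ΨCΨ⁻¹ for some constant self-adjoint n×n matrix C. -/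
open MeasureTheory Complex AddCircle Matrix
open scoped ENNReal Real

noncomputable section

/-!
Put `C = Ψ⁻¹ F Ψ`. Since `A = Ψ Ψ*`, the relation `A F* = F A` holds at a point exactly when
`C` is self-adjoint there. `C` lies in `H^∞` because `H^∞` is an algebra: the Fourier
coefficients of a product of `L²` functions are the convolution of theirs, which for analytic
factors vanishes at negative frequencies. If `C = C*` a.e., then `C_ij = conj C_ji`, so the
positive Fourier coefficients of `C_ij` are conjugates of negative ones of `C_ji` and vanish
too; hence `C` is constant.
-/

open scoped ComplexConjugate

section Fourier

variable {T : ℝ} [Fact (0 < T)]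

lemma memLp_top_fourier (m : ℤ) :
    MemLp (fun t : AddCircle T => (fourier m t : ℂ)) ⊤ haarAddCircle :=
  memLp_top_of_bound (fourier m).continuous.aestronglyMeasurable 1
    (.of_forall fun _ => (Circle.norm_coe _).le)

lemma fourierCoeff_conj (f : AddCircle T → ℂ) (m : ℤ) :
    fourierCoeff (fun t => conj (f t)) m = conj (fourierCoeff f (-m)) := by
  unfold fourierCoeff
  rw [← integral_conj]
  congr 1; funext t
  simp [smul_eq_mul]

lemma fourierCoeff_mul_fourier (f : AddCircle T → ℂ) (m k : ℤ) :
    fourierCoeff (fun t => f t * fourier m t) k = fourierCoeff f (k - m) := by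
  unfold fourierCoeff
  congr 1; funext t
  rw [smul_eq_mul, smul_eq_mul, neg_sub, sub_eq_add_neg, fourier_add]
  ring

lemma fourierBasis_repr_toLp {f : AddCircle T → ℂ} (hf : MemLp f 2 haarAddCircle) (i : ℤ) :
    fourierBasis.repr (hf.toLp f) i = fourierCoeff f i := by
  rw [fourierBasis_repr, fourierCoeff_congr_ae hf.coeFn_toLp]

theorem hasSum_fourierCoeff_mul {f g : AddCircle T → ℂ} (hf : MemLp f 2 haarAddCircle)
    (hg : MemLp g 2 haarAddCircle) (m : ℤ) :
    HasSum (fun i => fourierCoeff f (m - i) * fourierCoeff g i)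
      (fourierCoeff (fun t => f t * g t) m) := by
  have hu : MemLp (fun t => conj (f t) * fourier m t) 2 haarAddCircle :=
    (memLp_top_fourier m).mul' hf.star
  have hinner : inner ℂ (hu.toLp _) (hg.toLp g) = fourierCoeff (fun t => f t * g t) m := by
    rw [MeasureTheory.L2.inner_def]
    refine integral_congr_ae ?_
    filter_upwards [hu.coeFn_toLp, hg.coeFn_toLp] with t hut hgt
    simp only [hut, hgt, RCLike.inner_apply, map_mul, RCLike.conj_conj, smul_eq_mul,
      ← fourier_neg]
    ring
  have hcoeff (i : ℤ) :
      inner ℂ (hu.toLp _) (fourierBasis i) * inner ℂ (fourierBasis i) (hg.toLp g) =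
        fourierCoeff f (m - i) * fourierCoeff g i := by
    rw [← inner_conj_symm, ← fourierBasis.repr_apply_apply, ← fourierBasis.repr_apply_apply,
      fourierBasis_repr_toLp, fourierBasis_repr_toLp, fourierCoeff_mul_fourier,
      fourierCoeff_conj, neg_sub, RCLike.conj_conj]
  simpa only [hcoeff, hinner] using fourierBasis.hasSum_inner_mul_inner (hu.toLp _) (hg.toLp g)

lemma fourierCoeff_mul_eq_zero_of_neg {f g : AddCircle T → ℂ} (hf : MemLp f 2 haarAddCircle)
    (hg : MemLp g 2 haarAddCircle) (hf_neg : ∀ m < 0, fourierCoeff f m = 0)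
    (hg_neg : ∀ m < 0, fourierCoeff g m = 0) {m : ℤ} (hm : m < 0) :
    fourierCoeff (fun t => f t * g t) m = 0 := by
  refine (hasSum_fourierCoeff_mul hf hg m).unique ?_
  convert hasSum_zero with i
  rcases lt_or_ge i 0 with hi | hi
  · rw [hg_neg i hi, mul_zero]
  · rw [hf_neg (m - i) (by omega), zero_mul]

lemma ae_eq_const_of_fourierCoeff_eq_zero {f : AddCircle T → ℂ} (hf : MemLp f 2 haarAddCircle)
    (h : ∀ m ≠ 0, fourierCoeff f m = 0) :
    f =ᵐ[haarAddCircle] fun _ => fourierCoeff f 0 := by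
  have hLp : hf.toLp f = fourierCoeff f 0 • fourierBasis 0 := by
    apply fourierBasis.repr.injective
    ext i
    rw [map_smul, fourierBasis.repr_self, lp.coeFn_smul, Pi.smul_apply, smul_eq_mul,
      fourierBasis_repr_toLp, lp.single_apply]
    by_cases hi : i = 0
    · simp [hi]
    · rw [h i hi, Pi.single_eq_of_ne hi, mul_zero]
  have hbasis : ⇑(fourierBasis (T := T) 0) =ᵐ[haarAddCircle] fun _ => 1 := by
    filter_upwards [(coe_fourierBasis (T := T)).symm ▸ coeFn_fourierLp 2 0] with t ht
    rw [ht, fourier_zero]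
  filter_upwards [hf.coeFn_toLp, Lp.coeFn_smul (fourierCoeff f 0) (fourierBasis 0), hbasis]
    with t hft hsmul h1
  rw [← hft, hLp, hsmul, Pi.smul_apply, h1, smul_eq_mul, mul_one]

end Fourier

lemma ScalarHardy.mul {f g : UnitCircle → ℂ} (hf : ScalarHardy ⊤ f) (hg : ScalarHardy ⊤ g) :
    ScalarHardy ⊤ (fun t => f t * g t) :=
  ⟨hg.1.mul' hf.1, fun _ hm => fourierCoeff_mul_eq_zero_of_neg (hf.1.mono_exponent le_top)
    (hg.1.mono_exponent le_top) hf.2 hg.2 hm⟩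

lemma ScalarHardy.sum {α : Type*} {p : ℝ≥0∞} (hp : 1 ≤ p) (s : Finset α)
    {f : α → UnitCircle → ℂ} (hf : ∀ a ∈ s, ScalarHardy p (f a)) :
    ScalarHardy p (fun t => ∑ a ∈ s, f a t) := by
  have hint (a) (ha : a ∈ s) : Integrable (f a) mT :=
    memLp_one_iff_integrable.mp ((hf a ha).1.mono_exponent hp)
  refine ⟨memLp_finsetSum s fun a ha => (hf a ha).1, fun m hm => ?_⟩
  rw [← Finset.sum_fn, fourierCoeff.sum s f hint, Finset.sum_apply]
  exact Finset.sum_eq_zero fun a ha => (hf a ha).2 m hm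

lemma MatHardy.mul {ι κ μ : Type} [Fintype ι] [Fintype κ] [Fintype μ]
    {X : UnitCircle → Matrix ι κ ℂ} {Y : UnitCircle → Matrix κ μ ℂ}
    (hX : MatHardy ⊤ X) (hY : MatHardy ⊤ Y) : MatHardy ⊤ (fun t => X t * Y t) := by
  have hentry (i j) : ScalarHardy ⊤ (fun t => (X t * Y t) i j) := by
    simp only [Matrix.mul_apply]
    exact ScalarHardy.sum le_top _ fun k _ =>
      ScalarHardy.mul ⟨hX.1 i k, fun m hm => hX.2 m hm i k⟩
        ⟨hY.1 k j, fun m hm => hY.2 m hm k j⟩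
  exact ⟨fun i j => (hentry i j).1, fun m hm i j => (hentry i j).2 m hm⟩

lemma MatHardy.mono_exponent {ι κ : Type} [Fintype ι] [Fintype κ] {p q : ℝ≥0∞}
    {F : UnitCircle → Matrix ι κ ℂ} (hF : MatHardy q F) (hpq : p ≤ q) : MatHardy p F :=
  ⟨fun i j => (hF.1 i j).mono_exponent hpq, hF.2⟩

lemma MatHardy.exists_ae_eq_const_of_isHermitian {ι : Type} [Fintype ι]
    {C : UnitCircle → Matrix ι ι ℂ} (hC : MatHardy 2 C)
    (hsa : ∀ᵐ t ∂mT, (C t).IsHermitian) :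
    ∃ C₀ : Matrix ι ι ℂ, C₀.IsHermitian ∧ ∀ᵐ t ∂mT, C t = C₀ := by
  have hconj (i j : ι) : (fun t => C t i j) =ᵐ[mT] fun t => conj (C t j i) :=
    hsa.mono fun t ht => (ht.apply i j).symm
  have hcoeff (i j : ι) (m : ℤ) (hm : m ≠ 0) : fourierCoeff (fun t => C t i j) m = 0 := by
    rcases hm.lt_or_gt with hm | hm
    · exact hC.2 m hm i j
    · rw [fourierCoeff_congr_ae (hconj i j), fourierCoeff_conj, hC.2 (-m) (by omega) j i,
        map_zero]
  refine ⟨Matrix.of fun i j => fourierCoeff (fun t => C t i j) 0, ?_, ?_⟩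
  · ext i j
    rw [conjTranspose_apply, of_apply, of_apply, fourierCoeff_congr_ae (hconj i j),
      fourierCoeff_conj, neg_zero]
    rfl
  · have hentry : ∀ᵐ t ∂mT, ∀ i j, C t i j = fourierCoeff (fun t => C t i j) 0 :=
      ae_all_iff.2 fun i => ae_all_iff.2 fun j =>
        ae_eq_const_of_fourierCoeff_eq_zero (hC.1 i j) (hcoeff i j)
    filter_upwards [hentry] with t ht
    exact Matrix.ext ht

lemma mul_mul_mul_eq_of_mul_eq_one {M : Type*} [Monoid M] {ψ ψi : M} (h : ψ * ψi = 1)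
    (f : M) : ψ * (ψi * f * ψ) * ψi = f := by
  rw [mul_assoc, mul_assoc, h, mul_one, ← mul_assoc, h, one_mul]

lemma mul_star_self_mul_star_eq_iff_isSelfAdjoint {R : Type*} [Monoid R] [StarMul R]
    {ψ ψi : R} (h : ψ * ψi = 1) (h' : ψi * ψ = 1) (f : R) :
    ψ * star ψ * star f = f * (ψ * star ψ) ↔ IsSelfAdjoint (ψi * f * ψ) := by
  have hl (x : R) : ψ * (ψi * x) = x := by rw [← mul_assoc, h, one_mul]
  have hl' (x : R) : ψi * (ψ * x) = x := by rw [← mul_assoc, h', one_mul]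
  have hs : star ψ * star ψi = 1 := by rw [← star_mul, h', star_one]
  have hs' : star ψi * star ψ = 1 := by rw [← star_mul, h, star_one]
  rw [IsSelfAdjoint, star_mul, star_mul]
  constructor
  · intro e
    simpa only [mul_assoc, hl', hs, hs', mul_one] using congrArg (fun x => ψi * x * star ψi) e
  · intro e
    simpa only [mul_assoc, hl, hs, hs', mul_one] using congrArg (fun x => ψ * x * star ψ) e

theorem stmt12_general {n : ℕ} (A Ψ Ψi F : UnitCircle → Matrix (Fin n) (Fin n) ℂ)
    (hΨ : MatHardy ⊤ Ψ) (hΨi : MatHardy ⊤ Ψi)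
    (hinv : ∀ᵐ t ∂mT, Ψ t * Ψi t = 1 ∧ Ψi t * Ψ t = 1)
    (hfact : ∀ᵐ t ∂mT, A t = Ψ t * (Ψ t)ᴴ)
    (hF : MatHardy ⊤ F) :
    (∀ᵐ t ∂mT, A t * (F t)ᴴ = F t * A t) ↔
      ∃ C : Matrix (Fin n) (Fin n) ℂ, Cᴴ = C ∧ ∀ᵐ t ∂mT, F t = Ψ t * C * Ψi t := by
  have key : ∀ᵐ t ∂mT,
      (A t * (F t)ᴴ = F t * A t ↔ (Ψi t * F t * Ψ t).IsHermitian) := by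
    filter_upwards [hinv, hfact] with t hi ha
    rw [ha]
    exact mul_star_self_mul_star_eq_iff_isSelfAdjoint hi.1 hi.2 (F t)
  constructor
  · intro hAF
    have hsa : ∀ᵐ t ∂mT, (Ψi t * F t * Ψ t).IsHermitian := by
      filter_upwards [hAF, key] with t h hk
      exact hk.1 h
    obtain ⟨C, hCh, hCt⟩ :=
      (((hΨi.mul hF).mul hΨ).mono_exponent le_top).exists_ae_eq_const_of_isHermitian hsa
    refine ⟨C, hCh, ?_⟩
    filter_upwards [hinv, hCt] with t hi ht
    rw [← ht, mul_mul_mul_eq_of_mul_eq_one hi.1]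
  · rintro ⟨C, hCh, hFC⟩
    filter_upwards [hinv, hFC, key] with t hi hf hk
    rw [hk, hf, mul_mul_mul_eq_of_mul_eq_one hi.2]
    exact hCh

/-- Let `A` be a bounded positive definite matrix function with bounded inverse and
`A = Ψ Ψᴴ`, where `Ψ` is invertible in `H^∞(M_n)` (with inverse `Ψi ∈ H^∞(M_n)`).
Then `F ∈ H^∞(M_n)` satisfies `A Fᴴ = F A` a.e. iff `F = Ψ C Ψ⁻¹` for a constant
self-adjoint matrix `C`. -/
theorem stmt12 {n : ℕ} (A Ψ Ψi F : UnitCircle → Matrix (Fin n) (Fin n) ℂ)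
    (hAm : ∀ i j, MemLp (fun t => A t i j) ⊤ mT)
    (hAh : ∀ᵐ t ∂mT, (A t)ᴴ = A t)
    (hpos : ∃ δ : ℝ, 0 < δ ∧ ∀ᵐ t ∂mT, ∀ v : EuclideanSpace ℂ (Fin n),
      δ * ‖v‖ ^ 2 ≤ (inner ℂ v (Matrix.toEuclideanLin (A t) v) : ℂ).re)
    (hΨ : MatHardy ⊤ Ψ) (hΨi : MatHardy ⊤ Ψi)
    (hinv : ∀ᵐ t ∂mT, Ψ t * Ψi t = 1 ∧ Ψi t * Ψ t = 1)
    (hfact : ∀ᵐ t ∂mT, A t = Ψ t * (Ψ t)ᴴ)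
    (hF : MatHardy ⊤ F) :
    (∀ᵐ t ∂mT, A t * (F t)ᴴ = F t * A t) ↔
      ∃ C : Matrix (Fin n) (Fin n) ℂ, Cᴴ = C ∧ ∀ᵐ t ∂mT, F t = Ψ t * C * Ψi t :=
  stmt12_general A Ψ Ψi F hΨ hΨi hinv hfact hF

end
end
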